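/- Let H be a simple hypergraph with e-index k. Then the following are equivalent: (i) H has no odd exact cycle; (ii) every odd-indexed coefficient c_{2r+1} of the characteristic polynomial x^k + c_1 x^{k-1} + ... + c_k of U(H) vanishes; (iii) the spectrum of U(H) is symmetric about the origin, i.e., λ is an eigenvalue of multiplicity r iff −λ is an eigenvalue of multiplicity r. -/

import Mathlib

variable {V : Type} [Fintype V] [DecidableEq V]

/-- A finite hypergraph: a finite vertex set and a multiset of nonempty edges. -/
structure FinHypergraph (V : Type) [Fintype V] [DecidableEq V] where
  verts : Finset V
  edges : Multiset (Finset V)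
  edges_sub : ∀ e ∈ edges, e ⊆ verts
  edges_nonempty : ∀ e ∈ edges, e.Nonempty

open Classical in
/-- `IH H` is `I(H)`: all parts of 2-partitions of edges plus all singletons of `V(H)`. -/
noncomputable def IH (H : FinHypergraph V) : Finset (Finset V) :=
  Finset.univ.filter fun S =>
    (S.Nonempty ∧ ∃ e ∈ H.edges, S ⊂ e) ∨ ∃ v ∈ H.verts, S = {v}

/-- The unified matrix of a hypergraph, indexed by `I(H)`. -/
noncomputable def U (H : FinHypergraph V) : Matrix ↥(IH H) ↥(IH H) ℝ := fun S T =>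
  if (S : Finset V) = (T : Finset V) then
    (if (S : Finset V).card = 1 then (H.edges.count (S : Finset V) : ℝ) else 0)
  else if Disjoint (S : Finset V) (T : Finset V) then
    (H.edges.count ((S : Finset V) ∪ (T : Finset V)) : ℝ)
  else 0

/-- Degree of a vertex: number of edges (with multiplicity) containing it. -/
def deg (H : FinHypergraph V) (v : V) : ℕ := (H.edges.filter (fun e => v ∈ e)).card

/-- Unified degree of a set `S`: number of edges (with multiplicity) containing `S`. -/
def udeg (H : FinHypergraph V) (S : Finset V) : ℕ := (H.edges.filter (fun e => S ⊆ e)).card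

/-- `incl H` = ∂(H): number of edges of cardinality ≥ 2 properly contained in another edge. -/
noncomputable def incl (H : FinHypergraph V) : ℕ :=
  Multiset.card (H.edges.filter (fun e => 2 ≤ e.card ∧ ∃ e' ∈ H.edges, e ⊂ e'))

/-- A hypergraph is simple if it has no multiple edges and no loops. -/
def Simple (H : FinHypergraph V) : Prop :=
  H.edges.Nodup ∧ ∀ e ∈ H.edges, 2 ≤ e.card

/-- `tau S` = τ(S): the set of unordered 2-partitions of `S`. -/
def tau (S : Finset V) : Finset (Finset (Finset V)) :=
  (S.powerset.filter fun A => A.Nonempty ∧ A ⊂ S).image fun A => {A, S \ A}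


/-- Two parts are adjacent when they form a 2-partition of an edge of `H`. -/
def Adj (H : FinHypergraph V) (S T : Finset V) : Prop :=
  S.Nonempty ∧ T.Nonempty ∧ Disjoint S T ∧ S ∪ T ∈ H.edges

/-- There is an exact path of length `n` joining some `S ∋ u` and `S' ∋ v`. -/
def ExactPathBetween (H : FinHypergraph V) (u v : V) (n : ℕ) : Prop :=
  ∃ l : List (Finset V), l.length = n + 1 ∧ l.Nodup ∧ (∀ S ∈ l, S ∈ IH H) ∧
    l.Chain' (Adj H) ∧ (∃ S, l.head? = some S ∧ u ∈ S) ∧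
    (∃ S, l.getLast? = some S ∧ v ∈ S)

/-- `H` has an odd exact cycle: a closed exact walk with all internal parts distinct,
using at least three distinct edges, of odd length. -/
def HasOddExactCycle (H : FinHypergraph V) : Prop :=
  ∃ l : List (Finset V), 2 ≤ l.length ∧ l.head? = l.getLast? ∧
    l.dropLast.Nodup ∧ l.Chain' (Adj H) ∧
    3 ≤ ((l.zip l.tail).map (fun p => p.1 ∪ p.2)).toFinset.card ∧
    Odd (l.length - 1)

/-!
The graph `G_H` carries the support of the nonnegative symmetric matrix `U(H)`. If `G_H` is
bipartite, conjugating `U(H)` by the diagonal `±1` matrix of a 2-colouring gives `-U(H)`, so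
`χ(-x) = (-1)^k χ(x)` for its characteristic polynomial `χ`: the odd-indexed coefficients
vanish, and since `χ` splits over `ℝ` this says exactly that its roots are symmetric about `0`.
A symmetric spectrum makes `tr U(H)^m = ∑ λ^m` vanish for odd `m`, whereas an odd exact cycle
of length `m` is a closed walk in `G_H` and contributes at least `1` to this trace. Finally, if
there is no odd exact cycle then `G_H` is bipartite: a shortest odd closed walk in `G_H` has
distinct parts, and its consecutive edges differ (`S ∪ T = T ∪ R` forces `S = R`), so by parity
it uses at least three distinct edges.
-/

open Polynomial Function

namespace Polynomial

variable {R : Type*} [CommRing R]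

theorem coeff_comp_neg_X (p : R[X]) (n : ℕ) : (p.comp (-X)).coeff n = (-1) ^ n * p.coeff n := by
  simpa [mul_comm] using comp_C_mul_X_coeff (p := p) (r := -1) (n := n)

theorem neg_one_pow_mul_comp_neg_X_eq_self_iff [IsDomain R] [CharZero R] {p : R[X]} {k : ℕ}
    (hk : p.natDegree = k) :
    (-1) ^ k * p.comp (-X) = p ↔ ∀ r, 2 * r + 1 ≤ k → p.coeff (k - (2 * r + 1)) = 0 := by
  have hcoeff : ∀ n, ((-1) ^ k * p.comp (-X)).coeff n = (-1) ^ (k + n) * p.coeff n := fun n => by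
    rw [← C_1, ← C_neg, ← C_pow, coeff_C_mul, coeff_comp_neg_X, ← mul_assoc, pow_add]
  constructor
  · intro h r hr
    have := hcoeff (k - (2 * r + 1))
    rw [h, show k + (k - (2 * r + 1)) = 2 * (k - r - 1) + 1 by omega, Odd.neg_one_pow ⟨_, rfl⟩,
      neg_one_mul, eq_neg_iff_add_eq_zero, ← two_mul] at this
    exact (mul_eq_zero.mp this).resolve_left two_ne_zero
  · intro h
    ext n
    rw [hcoeff]
    rcases le_or_gt n k with hn | hn
    · obtain ⟨j, hj | hj⟩ := Nat.even_or_odd' (k - n)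
      · rw [show k + n = 2 * (n + j) by omega, pow_mul, neg_one_sq, one_pow, one_mul]
      · rw [show n = k - (2 * j + 1) by omega, h j (by omega), mul_zero]
    · rw [coeff_eq_zero_of_natDegree_lt (hk ▸ hn), mul_zero]

variable [IsDomain R]

theorem map_neg_roots_eq_iff (p : R[X]) :
    p.roots.map Neg.neg = p.roots ↔ ∀ μ, p.rootMultiplicity μ = p.rootMultiplicity (-μ) := by
  classical
  refine Multiset.ext.trans (forall_congr' fun μ => ?_)
  conv_lhs => rw [← neg_neg μ]
  rw [Multiset.count_map_eq_count' _ _ neg_injective, count_roots, count_roots, neg_neg, eq_comm]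

theorem roots_neg_one_pow_mul_comp_neg_X (p : R[X]) (k : ℕ) :
    ((-1) ^ k * p.comp (-X)).roots = p.roots.map Neg.neg := by
  rw [show ((-1 : R[X]) ^ k) = C ((-1) ^ k) by simp, roots_C_mul _ (by simp), roots_comp_neg_X]

theorem Monic.neg_one_pow_mul_comp_neg_X_eq_self_iff {p : R[X]} (hm : p.Monic) (hs : p.Splits) :
    (-1) ^ p.natDegree * p.comp (-X) = p ↔ p.roots.map Neg.neg = p.roots := by
  rw [← roots_neg_one_pow_mul_comp_neg_X p p.natDegree]
  refine ⟨fun h => by rw [h], fun h => ?_⟩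
  have hs' : ((-1) ^ p.natDegree * p.comp (-X)).Splits := by
    rw [show ((-1 : R[X]) ^ p.natDegree) = C ((-1) ^ p.natDegree) by simp]
    exact hs.comp_neg_X.C_mul _
  rw [hs'.eq_prod_roots_of_monic hm.neg_one_pow_natDegree_mul_comp_neg_X, h,
    ← hs.eq_prod_roots_of_monic hm]

end Polynomial

theorem Function.Odd.sum_map_eq_zero_of_map_neg_eq {α β : Type*} [InvolutiveNeg α]
    [AddCommGroup β] [IsAddTorsionFree β] {f : α → β} (hf : f.Odd) {s : Multiset α}
    (hs : s.map Neg.neg = s) : (s.map f).sum = 0 := by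
  refine neg_eq_self.mp ?_
  conv_lhs => rw [← hs, Multiset.map_map]
  rw [← Multiset.sum_map_neg]
  exact congrArg _ (Multiset.map_congr rfl fun a _ => by simp [hf a])

namespace Matrix

variable {n : Type*} [Fintype n] [DecidableEq n]

theorem charpoly_neg {R : Type*} [CommRing R] (M : Matrix n n R) :
    (-M).charpoly = (-1) ^ Fintype.card n * M.charpoly.comp (-X) := by
  have h : (compRingHom (-X)).mapMatrix (charmatrix M) = -charmatrix (-M) := by
    ext i j
    by_cases hij : i = j
    · subst hij; simp; ring
    · simp [charmatrix_apply_ne _ _ _ hij]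
  have := (compRingHom (R := R) (-X)).map_det (charmatrix M)
  rw [h, det_neg] at this
  rw [← coe_compRingHom_apply, charpoly.eq_1 M, this, ← mul_assoc, ← pow_add,
    Even.neg_one_pow ⟨_, rfl⟩, one_mul, charpoly]

theorem charpoly_neg_eq_self_iff {R : Type*} [CommRing R] [IsDomain R] [CharZero R]
    (M : Matrix n n R) :
    (-M).charpoly = M.charpoly ↔ ∀ r, 2 * r + 1 ≤ Fintype.card n →
      M.charpoly.coeff (Fintype.card n - (2 * r + 1)) = 0 := by
  rw [charpoly_neg]
  exact neg_one_pow_mul_comp_neg_X_eq_self_iff M.charpoly_natDegree_eq_dim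

theorem charpoly_neg_eq_self_iff_of_splits {R : Type*} [CommRing R] [IsDomain R]
    {M : Matrix n n R} (hM : M.charpoly.Splits) :
    (-M).charpoly = M.charpoly ↔ M.charpoly.roots.map Neg.neg = M.charpoly.roots := by
  rw [charpoly_neg, ← M.charpoly_natDegree_eq_dim]
  exact M.charpoly_monic.neg_one_pow_mul_comp_neg_X_eq_self_iff hM

theorem charpoly_neg_eq_of_colorable {R : Type*} [CommRing R] {G : SimpleGraph n}
    (hG : G.Colorable 2) {M : Matrix n n R} (hM : ∀ i j, M i j ≠ 0 → G.Adj i j) :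
    (-M).charpoly = M.charpoly := by
  obtain ⟨c⟩ := hG
  set D : Matrix n n R := diagonal fun i => (-1) ^ (c i : ℕ)
  have hD : D * D = 1 := by
    rw [diagonal_mul_diagonal, ← diagonal_one]
    simp [← pow_add, ← two_mul, pow_mul]
  have hDMD : D * M * D = -M := by
    ext i j
    simp only [D, diagonal_mul, mul_diagonal, neg_apply]
    by_cases hij : M i j = 0
    · simp [hij]
    · have hc : (c i : ℕ) + c j = 1 := by
        have := Fin.val_ne_of_ne (c.valid (hM i j hij))
        omega
      rw [mul_right_comm, ← pow_add, hc, pow_one, neg_one_mul]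
  rw [← hDMD, charpoly_mul_comm, ← mul_assoc, hD, one_mul]

theorem one_le_pow_apply_of_chain {R : Type*} [Semiring R] [PartialOrder R] [IsOrderedRing R]
    {M : Matrix n n R} (hM : ∀ i j, 0 ≤ M i j) {f : ℕ → n} {m : ℕ}
    (hf : ∀ t < m, 1 ≤ M (f t) (f (t + 1))) : 1 ≤ (M ^ m) (f 0) (f m) := by
  induction m with
  | zero => simp
  | succ m ih =>
    rw [pow_succ, mul_apply]
    calc (1 : R) = 1 * 1 := (one_mul 1).symm
      _ ≤ (M ^ m) (f 0) (f m) * M (f m) (f (m + 1)) :=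
        mul_le_mul (ih fun t ht => hf t (by omega)) (hf m m.lt_succ_self) zero_le_one
          (pow_apply_nonneg hM m _ _)
      _ ≤ ∑ l, (M ^ m) (f 0) l * M l (f (m + 1)) :=
        Finset.single_le_sum (f := fun l => (M ^ m) (f 0) l * M l (f (m + 1)))
          (fun l _ => mul_nonneg (pow_apply_nonneg hM m _ _) (hM _ _)) (Finset.mem_univ _)

theorem one_le_trace_pow_of_chain {R : Type*} [Semiring R] [PartialOrder R] [IsOrderedRing R]
    {M : Matrix n n R} (hM : ∀ i j, 0 ≤ M i j) {f : ℕ → n} {m : ℕ}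
    (hf : ∀ t < m, 1 ≤ M (f t) (f (t + 1))) (hclosed : f m = f 0) : 1 ≤ (M ^ m).trace := by
  have := one_le_pow_apply_of_chain hM hf
  rw [hclosed] at this
  exact this.trans (Finset.single_le_sum (fun i _ => pow_apply_nonneg hM m i i) (Finset.mem_univ _))

theorem IsHermitian.trace_pow {𝕜 : Type*} [RCLike 𝕜] {A : Matrix n n 𝕜}
    (hA : A.IsHermitian) (m : ℕ) : (A ^ m).trace = (A.charpoly.roots.map (· ^ m)).sum := by
  conv_lhs => rw [hA.spectral_theorem, ← map_pow, Unitary.conjStarAlgAut_apply, trace_mul_cycle,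
    Unitary.coe_star_mul_self, one_mul, diagonal_pow, trace_diagonal]
  simp [hA.roots_charpoly_eq_eigenvalues]

end Matrix

section ClosedChain

variable {α : Type*} {R : α → α → Prop}

/-- `f` is a closed walk of length `n` for the relation `R`, unrolled periodically. -/
def IsClosedChain (R : α → α → Prop) (f : ℕ → α) (n : ℕ) : Prop :=
  (∀ i, R (f i) (f (i + 1))) ∧ Periodic f n

theorem IsClosedChain.of_segment {f : ℕ → α} {a L : ℕ} (hL : 0 < L)
    (hf : ∀ t < L, R (f (a + t)) (f (a + t + 1))) (hclosed : f (a + L) = f a) :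
    IsClosedChain R (fun t => f (a + t % L)) L := by
  refine ⟨fun t => ?_, fun t => by simp⟩
  show R (f (a + t % L)) (f (a + (t + 1) % L))
  rw [← Nat.mod_add_mod]
  have ht := Nat.mod_lt t hL
  rcases Nat.lt_or_ge (t % L + 1) L with h | h
  · rw [Nat.mod_eq_of_lt h, ← add_assoc]
    exact hf _ ht
  · have hL' : t % L + 1 = L := by omega
    have := hf _ ht
    rw [add_assoc, hL', hclosed] at this
    rw [hL', Nat.mod_self, add_zero]
    exact this

theorem IsClosedChain.three_le_of_irrefl (hR : ∀ a, ¬R a a) {f : ℕ → α} {n : ℕ}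
    (h : IsClosedChain R f n) (hn : Odd n) : 3 ≤ n := by
  obtain ⟨k, rfl⟩ := hn
  rcases k with _ | k
  · exact absurd (h.2 0 ▸ h.1 0) (hR _)
  · omega

/-- An odd closed walk visiting a vertex twice splits there into two shorter closed walks,
one of which is odd. -/
theorem IsClosedChain.exists_injOn {f : ℕ → α} {n : ℕ} (h : IsClosedChain R f n)
    (hn : Odd n) :
    ∃ g m, IsClosedChain R g m ∧ Odd m ∧ Set.InjOn g (Set.Iio m) := by
  induction n using Nat.strong_induction_on generalizing f with
  | _ n ih =>
  by_cases hinj : Set.InjOn f (Set.Iio n)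
  · exact ⟨f, n, h, hn, hinj⟩
  obtain ⟨i, j, hj, hij, hfij⟩ : ∃ i, ∃ j < n, i < j ∧ f i = f j := by
    simp only [Set.InjOn, Set.mem_Iio, not_forall] at hinj
    obtain ⟨i, hi, j, hj, hfij, hne⟩ := hinj
    rcases Nat.lt_or_gt_of_ne hne with hlt | hlt
    · exact ⟨i, j, hj, hlt, hfij⟩
    · exact ⟨j, i, hi, hlt, hfij.symm⟩
  have hinner : IsClosedChain R (fun t => f (i + t % (j - i))) (j - i) :=
    .of_segment (by omega) (fun t _ => h.1 _) (by rw [Nat.add_sub_cancel' hij.le, hfij])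
  have houter : IsClosedChain R (fun t => f (j + t % (n - (j - i)))) (n - (j - i)) :=
    .of_segment (by omega) (fun t _ => h.1 _)
      (by rw [show j + (n - (j - i)) = i + n by omega, h.2 i, hfij])
  rcases Nat.even_or_odd (j - i) with he | ho
  · exact ih _ (by omega) houter (Nat.Odd.sub_even (by omega) hn he)
  · exact ih _ (by omega) hinner ho

end ClosedChain

theorem Function.Periodic.three_le_card_image_range {β : Type*} [DecidableEq β] {u : ℕ → β}
    {n : ℕ} (hu : Periodic u n) (hn : Odd n) (hne : ∀ i, u i ≠ u (i + 1)) :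
    3 ≤ ((Finset.range n).image u).card := by
  by_contra! hlt
  have h1 : 1 < n := by
    obtain ⟨k, rfl⟩ := hn
    rcases k with _ | k
    · exact absurd (hu 0).symm (hne 0)
    · omega
  have hpair : (Finset.range n).image u = {u 0, u 1} := by
    refine (Finset.eq_of_subset_of_card_le (Finset.insert_subset_iff.mpr ⟨?_, ?_⟩) ?_).symm
    · exact Finset.mem_image_of_mem u (Finset.mem_range.mpr (by omega))
    · exact Finset.singleton_subset_iff.mpr (Finset.mem_image_of_mem u (Finset.mem_range.mpr h1))
    · rw [Finset.card_pair (hne 0)]; omega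
  have hmem : ∀ i, u i = u 0 ∨ u i = u 1 := fun i => by
    have : u (i % n) ∈ (Finset.range n).image u :=
      Finset.mem_image_of_mem u (Finset.mem_range.mpr (Nat.mod_lt i (by omega)))
    simpa [hpair, hu.map_mod_nat] using this
  have halt : ∀ i, u i = if Even i then u 0 else u 1 := fun i => by
    induction i with
    | zero => simp
    | succ i ih =>
      have := hne i
      rcases hmem (i + 1) with h | h <;> by_cases he : Even i <;>
        simp_all [Nat.even_add_one]
  have := halt n
  rw [if_neg (Nat.not_even_iff_odd.mpr hn), ← zero_add n, hu 0] at this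
  exact hne 0 this

section Hypergraph

variable {H : FinHypergraph V}

namespace Adj

variable {R S T : Finset V}

theorem symm (h : Adj H S T) : Adj H T S :=
  ⟨h.2.1, h.1, h.2.2.1.symm, Finset.union_comm S T ▸ h.2.2.2⟩

theorem ne (h : Adj H S T) : S ≠ T := by
  rintro rfl
  exact h.1.ne_empty (disjoint_self.mp h.2.2.1)

theorem mem_IH (h : Adj H S T) : S ∈ IH H := by
  refine Finset.mem_filter.mpr ⟨Finset.mem_univ _, Or.inl ⟨h.1, S ∪ T, h.2.2.2, ?_⟩⟩
  obtain ⟨x, hx⟩ := h.2.1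
  exact Finset.ssubset_iff_of_subset Finset.subset_union_left |>.mpr
    ⟨x, Finset.mem_union_right _ hx, Finset.disjoint_right.mp h.2.2.1 hx⟩

theorem eq_of_union_eq (h₁ : Adj H R S) (h₂ : Adj H S T) (h : R ∪ S = S ∪ T) : R = T := by
  rw [← Finset.union_sdiff_cancel_right h₁.2.2.1, h, Finset.union_sdiff_cancel_left h₂.2.2.1]

end Adj

/-- The graph `G_H` on `I(H)`. -/
def partGraph (H : FinHypergraph V) : SimpleGraph (IH H) where
  Adj S T := Adj H S T
  symm := ⟨fun _ _ => Adj.symm⟩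
  loopless := ⟨fun _ h => Adj.ne h rfl⟩

theorem IsClosedChain.three_le_card_image_union {g : ℕ → Finset V} {m : ℕ}
    (hg : IsClosedChain (Adj H) g m) (hm : Odd m) (hinj : Set.InjOn g (Set.Iio m)) :
    3 ≤ ((Finset.range m).image fun i => g i ∪ g (i + 1)).card := by
  have hm3 := hg.three_le_of_irrefl (fun S h => h.ne rfl) hm
  have hper : Periodic (fun i => g i ∪ g (i + 1)) m := fun i => by
    simp only [add_right_comm i m 1, hg.2 i, hg.2 (i + 1)]
  refine hper.three_le_card_image_range hm fun i hi => ?_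
  have h2 := (hg.1 i).eq_of_union_eq (hg.1 (i + 1)) hi
  rw [← hg.2.map_mod_nat i, ← hg.2.map_mod_nat (i + 1 + 1)] at h2
  have hmod : i % m = (i + 2) % m :=
    hinj (Nat.mod_lt _ (by omega)) (Nat.mod_lt _ (by omega)) h2
  have := Nat.le_of_dvd two_pos <| by
    simpa using (Nat.modEq_iff_dvd' (by omega)).mp hmod
  omega

theorem hasOddExactCycle_of_isClosedChain {f : ℕ → Finset V} {n : ℕ}
    (hf : IsClosedChain (Adj H) f n) (hn : Odd n) : HasOddExactCycle H := by
  obtain ⟨g, m, hg, hm, hinj⟩ := hf.exists_injOn hn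
  have hclosed : g m = g 0 := by simpa using hg.2 0
  refine ⟨(List.range (m + 1)).map g, ?_, ?_, ?_, ?_, ?_, by simpa using hm⟩
  · simpa using Nat.succ_le_succ hm.pos
  · simp [List.getLast?_eq_getElem?, List.head?_eq_getElem?, hclosed]
  · simpa [List.range_succ] using
      List.Nodup.map_on (fun i hi j hj => hinj (by simpa using hi) (by simpa using hj))
        List.nodup_range
  · show List.IsChain _ _
    rw [List.isChain_map, List.isChain_range_succ]
    exact fun i _ => hg.1 i
  · have hunions : ((((List.range (m + 1)).map g).zip ((List.range (m + 1)).map g).tail).map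
        fun p => p.1 ∪ p.2).toFinset = (Finset.range m).image fun i => g i ∪ g (i + 1) := by
      ext S
      simp [List.mem_iff_getElem, List.getElem_zip]
    rw [hunions]
    exact hg.three_le_card_image_union hm hinj

theorem HasOddExactCycle.exists_isClosedChain (h : HasOddExactCycle H) :
    ∃ f n, IsClosedChain (Adj H) f n ∧ Odd n := by
  obtain ⟨l, hlen, hends, -, hchain, -, hodd⟩ := h
  refine ⟨_, _, .of_segment (a := 0) (f := fun t => l.getD t ∅) hodd.pos (fun t ht => ?_) ?_,
    hodd⟩
  · rw [zero_add, List.getD_eq_getElem _ _ (by omega), List.getD_eq_getElem _ _ (by omega)]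
    exact List.isChain_iff_getElem.mp hchain t (by omega)
  · simpa [List.getD_eq_getElem?_getD, List.head?_eq_getElem?, List.getLast?_eq_getElem?] using
      congrArg (·.getD ∅) hends.symm

theorem partGraph_colorable_two (h : ¬HasOddExactCycle H) : (partGraph H).Colorable 2 := by
  refine SimpleGraph.two_colorable_iff_forall_loop_even.mpr fun u w => ?_
  by_contra hodd
  rw [Nat.not_even_iff_odd] at hodd
  refine h (hasOddExactCycle_of_isClosedChain (.of_segment (a := 0)
    (f := fun t => (w.getVert t).1) hodd.pos (fun t ht => ?_) (by simp)) hodd)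
  simp only [zero_add]
  exact w.adj_getVert_succ ht

theorem U_apply_comm (S T : IH H) : U H S T = U H T S := by
  by_cases h : (S : Finset V) = T
  · rw [Subtype.ext h]
  · simp only [U, if_neg h, if_neg (Ne.symm h), disjoint_comm, Finset.union_comm]

theorem isHermitian_U : (U H).IsHermitian := by
  ext S T
  simp [U_apply_comm S T]

theorem U_apply_nonneg (S T : IH H) : 0 ≤ U H S T := by
  unfold U
  split_ifs <;> positivity

theorem nonempty_of_mem_IH {S : Finset V} (hS : S ∈ IH H) : S.Nonempty := by
  rcases (Finset.mem_filter.mp hS).2 with ⟨h, -⟩ | ⟨v, -, rfl⟩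
  · exact h
  · exact Finset.singleton_nonempty v

theorem partGraph_adj_of_U_apply_ne_zero (hs : Simple H) {S T : IH H} (h : U H S T ≠ 0) :
    (partGraph H).Adj S T := by
  unfold U at h
  split_ifs at h with _ hcard hdisj
  · have := hs.2 S (Multiset.count_ne_zero.mp (by simpa using h))
    omega
  · exact absurd rfl h
  · exact ⟨nonempty_of_mem_IH S.2, nonempty_of_mem_IH T.2, hdisj,
      Multiset.count_ne_zero.mp (by simpa using h)⟩
  · exact absurd rfl h

theorem one_le_U_apply_of_adj {S T : IH H} (h : Adj H S T) : 1 ≤ U H S T := by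
  rw [U, if_neg h.ne, if_pos h.2.2.1]
  exact_mod_cast Multiset.one_le_count_iff_mem.mpr h.2.2.2

theorem not_hasOddExactCycle_of_map_neg_roots_eq
    (h : (U H).charpoly.roots.map Neg.neg = (U H).charpoly.roots) : ¬HasOddExactCycle H := by
  intro hc
  obtain ⟨f, n, hf, hn⟩ := hc.exists_isClosedChain
  have h1 : 1 ≤ (U H ^ n).trace :=
    Matrix.one_le_trace_pow_of_chain U_apply_nonneg (f := fun t => ⟨f t, (hf.1 t).mem_IH⟩)
      (fun t _ => one_le_U_apply_of_adj (hf.1 t)) (Subtype.ext (by simpa using hf.2 0))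
  have h0 : (U H ^ n).trace = 0 := by
    rw [isHermitian_U.trace_pow]
    exact Function.Odd.sum_map_eq_zero_of_map_neg_eq (fun x => hn.neg_pow x) h
  linarith

end Hypergraph

theorem no_odd_exact_cycle_tfae (H : FinHypergraph V) (hs : Simple H) :
    ((¬ HasOddExactCycle H) ↔
      (∀ r : ℕ, 2*r+1 ≤ Fintype.card ↥(IH H) →
        ((U H).charpoly).coeff (Fintype.card ↥(IH H) - (2*r+1)) = 0)) ∧
    ((∀ r : ℕ, 2*r+1 ≤ Fintype.card ↥(IH H) →
        ((U H).charpoly).coeff (Fintype.card ↥(IH H) - (2*r+1)) = 0) ↔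
      (∀ μ : ℝ, ((U H).charpoly).rootMultiplicity μ =
        ((U H).charpoly).rootMultiplicity (-μ))) := by
  have hsym := Matrix.charpoly_neg_eq_self_iff_of_splits (isHermitian_U (H := H)).splits_charpoly
  -- (ii) and (iii) both become `(-U H).charpoly = (U H).charpoly`
  rw [← (U H).charpoly_neg_eq_self_iff, ← map_neg_roots_eq_iff, ← hsym]
  refine ⟨⟨fun h => ?_, fun h => ?_⟩, Iff.rfl⟩
  · exact Matrix.charpoly_neg_eq_of_colorable (partGraph_colorable_two h)
      fun _ _ => partGraph_adj_of_U_apply_ne_zero hs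
  · exact not_hasOddExactCycle_of_map_neg_roots_eq (hsym.mp h)
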